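/- Let $X$ be a compact metric space and $f: X \to X$ a homeomorphism. Then $f$ has the gluing-orbit property if and only if $f^{-1}$ has the gluing-orbit property. -/

import Mathlib

open Function Metric Filter

variable {X : Type*}

/-- `(c, t)` is `ε`-traced by `z`: an orbit sequence `c = (x_j, m_j)_{j ∈ ℕ}` with gap
`t = (t_j)_{j ∈ ℕ}` is `ε`-traced by `z` if `d(f^(s_j + l)(z), f^l(x_j)) ≤ ε` for all
`0 ≤ l ≤ m_j`, where `s_j = ∑_{i<j} (m_i + t_i)`. -/
def TracedBy [MetricSpace X] (f : X → X) (c : ℕ → X × ℕ) (t : ℕ → ℕ) (ε : ℝ) (z : X) : Prop :=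
  ∀ j l, l ≤ (c j).2 →
    dist (f^[(∑ i ∈ Finset.range j, ((c i).2 + t i)) + l] z) (f^[l] (c j).1) ≤ ε

/-- `f` has the gluing-orbit property: for each `ε > 0` there is `M ∈ ℕ` such that every
orbit sequence admits a gap with entries in `{1, …, M}` so that the pair is `ε`-traced by
some point. -/
def GluingOrbit [MetricSpace X] (f : X → X) : Prop :=
  ∀ ε : ℝ, 0 < ε → ∃ M : ℕ, ∀ c : ℕ → X × ℕ, ∃ t : ℕ → ℕ,
    (∀ j, 1 ≤ t j ∧ t j ≤ M) ∧ ∃ z : X, TracedBy f c t ε z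

/-! The `f⁻¹`-orbit segment of length `m` from `x` is the `f`-orbit segment of length `m` from
`f⁻ᵐ x`, run backwards. So to glue the first `n + 1` segments of an `f⁻¹`-orbit sequence, glue
their reversals in reverse order for `f` and follow the tracing orbit backwards from the end of
its last segment; the gaps are those of `f`, reversed, hence still bounded by `M(ε)`. Since
tracing is a closed condition and the bounded gaps form a compact set, Cantor's intersection
theorem passes from these finite gluings to the whole sequence. -/

open Finset

def TracedByUpTo [MetricSpace X] (f : X → X) (c : ℕ → X × ℕ) (t : ℕ → ℕ) (ε : ℝ) (z : X)
    (n : ℕ) : Prop :=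
  ∀ j ≤ n, ∀ l ≤ (c j).2,
    dist (f^[(∑ i ∈ range j, ((c i).2 + t i)) + l] z) (f^[l] (c j).1) ≤ ε

theorem isClosed_setOf_tracedByUpTo [MetricSpace X] {f : X → X} (hf : Continuous f)
    (c : ℕ → X × ℕ) (ε : ℝ) (n : ℕ) :
    IsClosed {p : (ℕ → ℕ) × X | TracedByUpTo f c p.1 ε p.2 n} := by
  simp only [TracedByUpTo, Set.ofPred_forall]
  refine isClosed_biInter fun j _ => isClosed_biInter fun l _ => isClosed_le ?_ continuous_const
  have hiterate : Continuous fun q : ℕ × X => f^[q.1] q.2 :=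
    continuous_prod_of_discrete_left.mpr fun k => hf.iterate k
  have htime : Continuous fun t : ℕ → ℕ => ∑ i ∈ range j, ((c i).2 + t i) + l := by fun_prop
  exact (hiterate.comp ((htime.comp continuous_fst).prodMk continuous_snd)).dist continuous_const

theorem exists_tracedBy_of_forall_tracedByUpTo [MetricSpace X] [CompactSpace X] {f : X → X}
    (hf : Continuous f) {c : ℕ → X × ℕ} {ε : ℝ} {M : ℕ}
    (h : ∀ n, ∃ t : ℕ → ℕ, (∀ j, 1 ≤ t j ∧ t j ≤ M) ∧ ∃ z, TracedByUpTo f c t ε z n) :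
    ∃ t : ℕ → ℕ, (∀ j, 1 ≤ t j ∧ t j ≤ M) ∧ ∃ z, TracedBy f c t ε z := by
  set gaps : Set (ℕ → ℕ) := Set.pi Set.univ fun _ => Set.Icc 1 M
  have hgaps : IsCompact gaps := isCompact_univ_pi fun _ => (Set.finite_Icc 1 M).isCompact
  set S : ℕ → Set ((ℕ → ℕ) × X) := fun n => gaps ×ˢ Set.univ ∩ {p | TracedByUpTo f c p.1 ε p.2 n}
  have hS_anti (n : ℕ) : S (n + 1) ⊆ S n := fun p ⟨hp, htr⟩ =>
    ⟨hp, fun j hj => htr j (Nat.le_succ_of_le hj)⟩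
  have hS_nonempty (n : ℕ) : (S n).Nonempty := by
    obtain ⟨t, ht, z, hz⟩ := h n
    exact ⟨(t, z), ⟨fun j _ => ht j, trivial⟩, hz⟩
  have hS_closed (n : ℕ) : IsClosed (S n) :=
    (hgaps.isClosed.prod isClosed_univ).inter (isClosed_setOf_tracedByUpTo hf c ε n)
  have hS_compact : IsCompact (S 0) :=
    (hgaps.prod isCompact_univ).of_isClosed_subset (hS_closed 0) Set.inter_subset_left
  obtain ⟨⟨t, z⟩, hp⟩ := hS_compact.nonempty_iInter_of_sequence_nonempty_isCompact_isClosed S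
    hS_anti hS_nonempty hS_closed
  rw [Set.mem_iInter] at hp
  exact ⟨t, fun j => (hp 0).1.1 j trivial, z, fun j l hl => (hp j).2 j le_rfl l hl⟩

theorem Equiv.symm_iterate_iterate_of_le (f : X ≃ X) {a b : ℕ} (h : a ≤ b) (z : X) :
    f.symm^[a] (f^[b] z) = f^[b - a] z := by
  obtain ⟨d, rfl⟩ := Nat.exists_eq_add_of_le h
  rw [Nat.add_sub_cancel_left, iterate_add_apply]
  exact f.leftInverse_symm.iterate a _

theorem Equiv.iterate_symm_iterate_of_le (f : X ≃ X) {a b : ℕ} (h : a ≤ b) (z : X) :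
    f^[a] (f.symm^[b] z) = f.symm^[b - a] z := by
  simpa using f.symm.symm_iterate_iterate_of_le h z

def Equiv.reverseOrbitSeq (f : X ≃ X) (c : ℕ → X × ℕ) (n : ℕ) : ℕ → X × ℕ :=
  fun k => (f.symm^[(c (n - k)).2] (c (n - k)).1, (c (n - k)).2)

theorem sum_range_reverse_add (m τ : ℕ → ℕ) {n j : ℕ} (hj : j ≤ n) :
    ∑ i ∈ range j, (m i + τ (n - 1 - i)) + ∑ i ∈ range (n - j), (m (n - i) + τ i) + m j
      = ∑ i ∈ range n, (m (n - i) + τ i) + m 0 := by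
  induction j with
  | zero => simp
  | succ j ih =>
    have hsplit : n - j = n - (j + 1) + 1 := by omega
    have hlast : n - (n - (j + 1)) = j + 1 := by omega
    have hgap : n - 1 - j = n - (j + 1) := by omega
    rw [← ih (by omega), sum_range_succ, hsplit, sum_range_succ, hlast, hgap]
    ring

theorem tracedByUpTo_symm_of_tracedBy_reverseOrbitSeq [MetricSpace X] (f : X ≃ X)
    {c : ℕ → X × ℕ} {T : ℕ → ℕ} {ε : ℝ} {z : X} {n : ℕ}
    (hz : TracedBy f (f.reverseOrbitSeq c n) T ε z) :
    TracedByUpTo f.symm c (fun i => T (n - 1 - i)) ε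
      (f^[∑ i ∈ range n, ((c (n - i)).2 + T i) + (c 0).2] z) n := by
  intro j hj l hl
  dsimp only
  have hnj : n - (n - j) = j := by omega
  have htr := hz (n - j) ((c j).2 - l) (by simp only [Equiv.reverseOrbitSeq, hnj]; omega)
  simp only [Equiv.reverseOrbitSeq, hnj] at htr
  have htime := sum_range_reverse_add (fun i => (c i).2) T hj
  rw [f.iterate_symm_iterate_of_le (Nat.sub_le _ _), Nat.sub_sub_self hl] at htr
  rw [f.symm_iterate_iterate_of_le (by omega)]
  convert htr using 3
  omega

theorem GluingOrbit.symm [MetricSpace X] [CompactSpace X] (f : X ≃ₜ X)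
    (h : GluingOrbit (f : X → X)) : GluingOrbit (f.symm : X → X) := by
  intro ε hε
  obtain ⟨M, hM⟩ := h ε hε
  refine ⟨M, fun c => exists_tracedBy_of_forall_tracedByUpTo f.symm.continuous fun n => ?_⟩
  obtain ⟨T, hT, z, hz⟩ := hM (f.toEquiv.reverseOrbitSeq c n)
  exact ⟨fun i => T (n - 1 - i), fun i => hT _, _,
    tracedByUpTo_symm_of_tracedBy_reverseOrbitSeq f.toEquiv hz⟩

/-- A homeomorphism of a compact metric space has the gluing-orbit property if and only if
its inverse has the gluing-orbit property. -/
theorem stmt3 [MetricSpace X] [CompactSpace X] (f : X ≃ₜ X) :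
    GluingOrbit (f : X → X) ↔ GluingOrbit (f.symm : X → X) :=
  ⟨GluingOrbit.symm f, fun h => by simpa using GluingOrbit.symm f.symm h⟩
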